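/- Define s(n) = 4n(H_n² - H_n^{(2)}) - 6n(H_n - 1) for n ≥ 1. Then for every n ≥ 2, s(n) = (2/(n-1))·∑_{k=1}^{n-1} s(k) + (4/(n-1))·∑_{k=1}^{n-1} 2k(H_k - 1) + n. -/

import Mathlib

open Finset

noncomputable def H (n : ℕ) : ℝ := ∑ i ∈ Finset.range n, (1 : ℝ) / (i + 1)

noncomputable def H2 (n : ℕ) : ℝ := ∑ i ∈ Finset.range n, (1 : ℝ) / ((i + 1) ^ 2)

noncomputable def s (n : ℕ) : ℝ := 4 * n * (H n ^ 2 - H2 n) - 6 * n * (H n - 1)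

/-!
Both partial sums on the right-hand side have closed forms in `H m` and `H2 m`, each checked by
induction on `m` from the one-step recurrences of `H` and `H2`. Substituting them for
`m = n - 1` and expanding `H n`, `H2 n` in terms of `H m`, `H2 m` leaves a rational identity in
`m`, `H m` and `H2 m`.
-/

lemma H_succ (m : ℕ) : H (m + 1) = H m + 1 / ((m : ℝ) + 1) := by
  simp [H, sum_range_succ]

lemma H2_succ (m : ℕ) : H2 (m + 1) = H2 m + 1 / ((m : ℝ) + 1) ^ 2 := by
  simp [H2, sum_range_succ]

lemma sum_Icc_two_mul_mul_H_sub_one (m : ℕ) :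
    ∑ k ∈ Icc 1 m, 2 * (k : ℝ) * (H k - 1) = m * (m + 1) * H m - (3 * (m : ℝ) ^ 2 + m) / 2 := by
  induction m with
  | zero => simp [H]
  | succ m ih =>
    rw [sum_Icc_succ_top (by omega), ih, H_succ]
    push_cast
    field_simp
    ring

lemma sum_Icc_s (m : ℕ) :
    ∑ k ∈ Icc 1 m, s k = 2 * ((m : ℝ) ^ 2 + m) * (H m ^ 2 - H2 m)
      - (5 * (m : ℝ) ^ 2 + m) * H m + (11 * (m : ℝ) ^ 2 + m) / 2 := by
  induction m with
  | zero => simp [H, H2]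
  | succ m ih =>
    rw [sum_Icc_succ_top (by omega), ih]
    simp only [s, H_succ, H2_succ]
    push_cast
    field_simp
    ring

theorem s_recurrence (n : ℕ) (hn : 2 ≤ n) :
    s n = (2 / ((n : ℝ) - 1)) * ∑ k ∈ Finset.Icc 1 (n - 1), s k
      + (4 / ((n : ℝ) - 1)) * ∑ k ∈ Finset.Icc 1 (n - 1), 2 * (k : ℝ) * (H k - 1)
      + n := by
  obtain ⟨m, rfl⟩ : ∃ m, n = m + 1 := ⟨n - 1, by omega⟩
  have hm : (m : ℝ) ≠ 0 := Nat.cast_ne_zero.mpr (by omega)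
  rw [Nat.add_sub_cancel, sum_Icc_s, sum_Icc_two_mul_mul_H_sub_one]
  simp only [s, H_succ, H2_succ]
  push_cast
  rw [add_sub_cancel_right]
  field_simp
  ring
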